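/- For all τ ∈ ℍ and z ∈ ℂ one has Θ_{3,18}(τ,z) − Θ_{−3,18}(τ,z) + Θ_{15,18}(τ,z) − Θ_{−15,18}(τ,z) − Θ_{9,18}(τ,z) + Θ_{−9,18}(τ,z) = ϑ11(τ,3z), where ϑ11 is given by its infinite product. Equivalently, wherever ϑ11(τ,z) = Θ_{1,2}(τ,z) − Θ_{−1,2}(τ,z) ≠ 0, the Jacobi form input attached to A_{1,16} satisfies χ^{(16)}_2(τ,z) + χ^{(16)}_{14}(τ,z) − χ^{(16)}_8(τ,z) = ϑ11(τ,3z)/ϑ11(τ,z), i.e. φ_{A_{1,16}} = −(ϑ|_{1/2}T^{(8)}_−(9))/ϑ with (ϑ|_{1/2}T^{(8)}_−(9))(τ,z) = −ϑ(τ,3z). -/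

import Mathlib

open Complex Finset Filter Topology

namespace JTPaux

/-- `E m = m(m-1)/2`. -/
def E (m : ℤ) : ℤ := m * (m - 1) / 2

lemma E_spec (m : ℤ) : 2 * E m = m * (m - 1) := by
  obtain ⟨c, hc⟩ : Even (m * (m - 1)) := by
    rcases Int.even_or_odd m with h | h
    · exact h.mul_right _
    · refine Even.mul_left ?_ _
      rcases h with ⟨k, hk⟩
      exact ⟨k, by omega⟩
  rw [E, hc, ← two_mul, Int.mul_ediv_cancel_left _ (by norm_num)]

lemma choose_two_int (k : ℕ) : ((k.choose 2 : ℤ)) * 2 = k * (k - 1) := by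
  induction k with
  | zero => simp
  | succ n ih =>
    rw [Nat.choose_succ_succ, Nat.choose_one_right]
    push_cast
    push_cast at ih
    ring_nf
    ring_nf at ih
    linarith

/-- Gaussian binomial coefficients (as complex numbers), defined by the
`q`-Pascal recursion. -/
def gb (q : ℂ) : ℕ → ℕ → ℂ
  | _, 0 => 1
  | 0, _ + 1 => 0
  | n + 1, k + 1 => gb q n (k + 1) + q ^ (n - k) * gb q n k

variable {q ζ : ℂ}

lemma gb_eq_zero (q : ℂ) : ∀ n k : ℕ, n < k → gb q n k = 0
  | _, 0, h => absurd h (by omega)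
  | 0, _ + 1, _ => rfl
  | n + 1, k + 1, h => by
    rw [gb, gb_eq_zero q n (k + 1) (by omega), gb_eq_zero q n k (by omega)]
    ring

lemma gbQ (q : ℂ) : ∀ n k : ℕ,
    gb q n k * ∏ i ∈ range k, (1 - q ^ (i + 1)) = ∏ i ∈ range k, (1 - q ^ (n - i))
  | n, 0 => by simp [gb]
  | 0, k + 1 => by
    rw [gb, zero_mul]
    refine (Finset.prod_eq_zero (Finset.mem_range.mpr (Nat.succ_pos k)) ?_).symm
    simp
  | n + 1, k + 1 => by
    rcases le_or_gt (k + 1) (n + 1) with hkn | hkn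
    · have h1 := gbQ q n (k + 1)
      have h2 := gbQ q n k
      have hterm : q ^ (n - k) * gb q n k * ∏ i ∈ range (k + 1), (1 - q ^ (i + 1)) =
          q ^ (n - k) * (1 - q ^ (k + 1)) * ∏ i ∈ range k, (1 - q ^ (n - i)) := by
        rw [Finset.prod_range_succ, ← h2]; ring
      rw [gb, add_mul, h1, hterm]
      have e1 : ∏ i ∈ range (k + 1), (1 - q ^ (n - i)) =
          (∏ i ∈ range k, (1 - q ^ (n - i))) * (1 - q ^ (n - k)) :=
        Finset.prod_range_succ _ _
      have e2 : ∏ i ∈ range (k + 1), (1 - q ^ (n + 1 - i)) =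
          (1 - q ^ (n + 1)) * ∏ i ∈ range k, (1 - q ^ (n - i)) := by
        rw [Finset.prod_range_succ', Nat.sub_zero, mul_comm]
        congr 1
        exact Finset.prod_congr rfl fun i hi => by congr 2; omega
      have e3 : q ^ (n - k) * (1 - q ^ (k + 1)) = q ^ (n - k) - q ^ (n + 1) := by
        rw [mul_sub, mul_one, ← pow_add]
        congr 2
        omega
      rw [e1, e2, e3]
      ring
    · rw [gb_eq_zero q (n + 1) (k + 1) (by omega), zero_mul]
      refine (Finset.prod_eq_zero (Finset.mem_range.mpr (show n + 1 < k + 1 by omega)) ?_).symm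
      simp

/-- Gauss's `q`-binomial theorem. -/
lemma gauss (q x : ℂ) : ∀ n : ℕ,
    ∏ j ∈ range n, (1 + x * q ^ j) =
      ∑ k ∈ range (n + 1), q ^ (k.choose 2) * gb q n k * x ^ k
  | 0 => by simp [gb]
  | n + 1 => by
    rw [Finset.prod_range_succ, gauss q x n]
    rw [mul_add, mul_one]
    -- LHS = Σ_{k≤n} c k + Σ_{k≤n} c k * x * q^n
    rw [Finset.sum_range_succ' (fun k => q ^ (k.choose 2) * gb q (n+1) k * x ^ k) (n+1)]
    -- RHS' = Σ_{k∈range(n+1)} (term (k+1)) + term 0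
    have h0 : q ^ ((0:ℕ).choose 2) * gb q (n+1) 0 * x ^ 0 = 1 := by simp [gb]
    rw [h0]
    have hsplit : ∀ k ∈ range (n + 1),
        q ^ ((k+1).choose 2) * gb q (n+1) (k+1) * x ^ (k+1) =
          q ^ ((k+1).choose 2) * gb q n (k+1) * x ^ (k+1) +
          (q ^ (k.choose 2) * gb q n k * x ^ k) * x * q ^ n := by
      intro k hk
      have hkn : k ≤ n := by simpa [Nat.lt_succ_iff] using hk
      rw [show gb q (n+1) (k+1) = gb q n (k+1) + q ^ (n - k) * gb q n k from rfl]
      rw [mul_add, add_mul]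
      congr 1
      have : (k+1).choose 2 = k.choose 2 + k := by
        rw [Nat.choose_succ_succ, Nat.choose_one_right, Nat.add_comm]
      rw [this]
      have : q ^ (k.choose 2 + k) * (q ^ (n - k) * gb q n k) =
          (q ^ (k.choose 2) * gb q n k) * q ^ (k + (n - k)) := by
        rw [pow_add, pow_add]; ring
      rw [this, show k + (n - k) = n by omega, pow_succ]
      ring
    rw [Finset.sum_congr rfl hsplit, Finset.sum_add_distrib]
    -- Σ_{k∈range(n+1)} q^{C(k+1,2)} gb n (k+1) x^{k+1}  =  Σ_{k∈range(n+2), k≥1} …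
    have e4 : ∑ k ∈ range (n + 1), q ^ ((k+1).choose 2) * gb q n (k+1) * x ^ (k+1) =
        ∑ k ∈ range (n + 2), q ^ (k.choose 2) * gb q n k * x ^ k - 1 := by
      rw [Finset.sum_range_succ' (fun k => q ^ (k.choose 2) * gb q n k * x ^ k) (n+1)]
      simp [gb]
    have e5 : ∑ k ∈ range (n + 2), q ^ (k.choose 2) * gb q n k * x ^ k =
        ∑ k ∈ range (n + 1), q ^ (k.choose 2) * gb q n k * x ^ k := by
      rw [Finset.sum_range_succ, gb_eq_zero q n (n+1) (by omega)]
      ring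
    rw [e4, e5, Finset.sum_mul]
    have e6 : ∑ i ∈ range (n+1), q ^ i.choose 2 * gb q n i * x ^ i * (x * q ^ n) =
        ∑ i ∈ range (n+1), q ^ i.choose 2 * gb q n i * x ^ i * x * q ^ n :=
      Finset.sum_congr rfl fun i _ => by ring
    rw [e6]
    ring

end JTPaux
section Estimates

open Complex Finset Filter Topology

variable {ι : Type*}

lemma norm_prod_one_add_sub_one_le (s : Finset ι) (a : ι → ℂ) :
    ‖(∏ i ∈ s, (1 + a i)) - 1‖ ≤ (∏ i ∈ s, (1 + ‖a i‖)) - 1 := by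
  classical
  induction s using Finset.cons_induction with
  | empty => simp
  | cons i s his ih =>
    rw [Finset.prod_cons, Finset.prod_cons]
    have h1 : (1 + a i) * ∏ j ∈ s, (1 + a j) - 1
        = ((∏ j ∈ s, (1 + a j)) - 1) + a i * ∏ j ∈ s, (1 + a j) := by ring
    rw [h1]
    have h2 : ‖∏ j ∈ s, (1 + a j)‖ ≤ ∏ j ∈ s, (1 + ‖a j‖) := by
      rw [norm_prod]
      exact Finset.prod_le_prod (fun j _ => norm_nonneg _)
        (fun j _ => (norm_add_le _ _).trans (by simp))
    have h3 : (0:ℝ) ≤ ‖a i‖ := norm_nonneg _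
    calc ‖((∏ j ∈ s, (1 + a j)) - 1) + a i * ∏ j ∈ s, (1 + a j)‖
        ≤ ‖(∏ j ∈ s, (1 + a j)) - 1‖ + ‖a i‖ * ‖∏ j ∈ s, (1 + a j)‖ := by
          refine (norm_add_le _ _).trans ?_
          rw [norm_mul]
      _ ≤ ((∏ j ∈ s, (1 + ‖a j‖)) - 1) + ‖a i‖ * ∏ j ∈ s, (1 + ‖a j‖) := by
          gcongr
      _ = (1 + ‖a i‖) * ∏ j ∈ s, (1 + ‖a j‖) - 1 := by ring

lemma prod_one_add_le_exp (s : Finset ι) (c : ι → ℝ) (hc : ∀ i ∈ s, 0 ≤ c i) :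
    ∏ i ∈ s, (1 + c i) ≤ Real.exp (∑ i ∈ s, c i) := by
  rw [Real.exp_sum]
  exact Finset.prod_le_prod (fun i hi => by linarith [hc i hi])
    (fun i hi => by simpa [add_comm] using Real.add_one_le_exp (c i))

lemma sum_geom_tail {r : ℝ} (h0 : 0 ≤ r) (h1 : r < 1) (M : ℕ) (t : Finset ℕ)
    (ht : ∀ j ∈ t, M ≤ j) : ∑ j ∈ t, r ^ j ≤ r ^ M * (1 - r)⁻¹ := by
  have e1 : ∑ j ∈ t, r ^ j = r ^ M * ∑ j ∈ t, r ^ (j - M) := by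
    rw [Finset.mul_sum]
    refine Finset.sum_congr rfl fun j hj => ?_
    rw [← pow_add]
    congr 1
    have := ht j hj
    omega
  rw [e1]
  have e2 : ∑ j ∈ t, r ^ (j - M) = ∑ n ∈ t.image (· - M), r ^ n := by
    rw [Finset.sum_image]
    intro x hx y hy hxy
    have hx' := ht x hx
    have hy' := ht y hy
    dsimp only at hxy
    omega
  have e3 : ∑ n ∈ t.image (· - M), r ^ n ≤ ∑' n : ℕ, r ^ n :=
    Summable.sum_le_tsum _ (fun i _ => pow_nonneg h0 i)
      (summable_geometric_of_lt_one h0 h1)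
  rw [e2]
  have e4 := tsum_geometric_of_lt_one h0 h1
  have : (0:ℝ) ≤ r ^ M := pow_nonneg h0 M
  nlinarith [e3, e4]

variable {q : ℂ}

lemma prod_est (hq : ‖q‖ < 1) (s : Finset ℕ) (e : ℕ → ℕ) (hinj : Set.InjOn e s)
    (M : ℕ) (hM : ∀ i ∈ s, M ≤ e i) :
    ‖(∏ i ∈ s, (1 - q ^ e i)) - 1‖ ≤ Real.exp (‖q‖ ^ M * (1 - ‖q‖)⁻¹) - 1 := by
  have h0 : (0:ℝ) ≤ ‖q‖ := norm_nonneg q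
  have key : ∑ i ∈ s, ‖q‖ ^ e i ≤ ‖q‖ ^ M * (1 - ‖q‖)⁻¹ := by
    have e2 : ∑ i ∈ s, ‖q‖ ^ e i = ∑ j ∈ s.image e, ‖q‖ ^ j :=
      (Finset.sum_image (fun x hx y hy hxy => hinj hx hy hxy)).symm
    rw [e2]
    refine sum_geom_tail h0 hq M _ ?_
    intro j hj
    obtain ⟨i, hi, rfl⟩ := Finset.mem_image.mp hj
    exact hM i hi
  have h1 : ‖(∏ i ∈ s, (1 + (-(q ^ e i)))) - 1‖ ≤ (∏ i ∈ s, (1 + ‖-(q ^ e i)‖)) - 1 :=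
    norm_prod_one_add_sub_one_le s _
  simp only [sub_eq_add_neg (1:ℂ)] at *
  refine h1.trans ?_
  have h2 : (∏ i ∈ s, (1 + ‖-(q ^ e i)‖)) ≤ Real.exp (∑ i ∈ s, ‖q‖ ^ e i) := by
    have := prod_one_add_le_exp s (fun i => ‖-(q ^ e i)‖) (fun i _ => norm_nonneg _)
    simpa [norm_pow] using this
  have h3 : Real.exp (∑ i ∈ s, ‖q‖ ^ e i) ≤ Real.exp (‖q‖ ^ M * (1 - ‖q‖)⁻¹) :=
    Real.exp_le_exp.mpr key
  linarith

lemma prod_norm_le (hq : ‖q‖ < 1) (s : Finset ℕ) (e : ℕ → ℕ) (hinj : Set.InjOn e s)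
    (hM : ∀ i ∈ s, 1 ≤ e i) :
    ‖∏ i ∈ s, (1 - q ^ e i)‖ ≤ Real.exp (‖q‖ * (1 - ‖q‖)⁻¹) := by
  have h0 : (0:ℝ) ≤ ‖q‖ := norm_nonneg q
  rw [norm_prod]
  have h1 : ∏ i ∈ s, ‖1 - q ^ e i‖ ≤ ∏ i ∈ s, (1 + ‖q‖ ^ e i) := by
    refine Finset.prod_le_prod (fun i _ => norm_nonneg _) (fun i _ => ?_)
    calc ‖1 - q ^ e i‖ ≤ ‖(1:ℂ)‖ + ‖q ^ e i‖ := norm_sub_le _ _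
      _ = 1 + ‖q‖ ^ e i := by simp [norm_pow]
  refine h1.trans ?_
  refine (prod_one_add_le_exp s _ (fun i _ => pow_nonneg h0 _)).trans ?_
  refine Real.exp_le_exp.mpr ?_
  have key : ∑ i ∈ s, ‖q‖ ^ e i ≤ ‖q‖ ^ 1 * (1 - ‖q‖)⁻¹ := by
    have e2 : ∑ i ∈ s, ‖q‖ ^ e i = ∑ j ∈ s.image e, ‖q‖ ^ j :=
      (Finset.sum_image (fun x hx y hy hxy => hinj hx hy hxy)).symm
    rw [e2]
    refine sum_geom_tail h0 hq 1 _ ?_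
    intro j hj
    obtain ⟨i, hi, rfl⟩ := Finset.mem_image.mp hj
    exact hM i hi
  simpa using key

lemma hasProd_of_factor_zero {f : ℕ → ℂ} (i₀ : ℕ) (h : f i₀ = 0) : HasProd f 0 := by
  have hev : ∀ᶠ s : Finset ℕ in atTop, ∏ i ∈ s, f i = 0 := by
    filter_upwards [Filter.eventually_ge_atTop ({i₀} : Finset ℕ)] with s hs
    exact Finset.prod_eq_zero (hs (Finset.mem_singleton_self i₀)) h
  exact Tendsto.congr' (by filter_upwards [hev] with s hs using hs.symm) tendsto_const_nhds

lemma multipliable_one_add {a : ℕ → ℂ} (ha : Summable a) :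
    Multipliable (fun n => 1 + a n) := by
  by_cases h : ∃ n, 1 + a n = 0
  · obtain ⟨n, hn⟩ := h
    exact ⟨0, hasProd_of_factor_zero n hn⟩
  · push_neg at h
    refine Complex.multipliable_of_summable_log ?_
    have h0' : Tendsto (fun n => ‖a n‖) atTop (𝓝 0) := by
      simpa using ha.tendsto_atTop_zero.norm
    have hsmall : ∀ᶠ n in atTop, ‖a n‖ ≤ 1/2 :=
      h0'.eventually (eventually_le_nhds (by norm_num : (0:ℝ) < 1/2))
    refine Summable.of_norm_bounded_eventually_nat (g := fun n => 2 * ‖a n‖)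
      (ha.norm.mul_left 2) ?_
    filter_upwards [hsmall] with n hn
    have h1 : ‖a n‖ < 1 := by linarith
    have h2 : (1 - ‖a n‖)⁻¹ ≤ 2 := by
      rw [inv_le_comm₀ (by linarith) (by norm_num)]
      linarith
    have h3 := Complex.norm_log_one_add_sub_self_le h1
    have h4 : ‖Complex.log (1 + a n)‖ ≤ ‖Complex.log (1 + a n) - a n‖ + ‖a n‖ := by
      simpa using norm_add_le (Complex.log (1 + a n) - a n) (a n)
    have h0 : (0:ℝ) ≤ ‖a n‖ := norm_nonneg _
    nlinarith [norm_nonneg (Complex.log (1 + a n) - a n)]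

end Estimates
namespace JTPaux

open Complex Finset Filter Topology

variable {q ζ : ℂ}

lemma zpow_sum₀ {a : ℂ} (ha : a ≠ 0) {ι : Type*} (s : Finset ι) (g : ι → ℤ) :
    a ^ (∑ i ∈ s, g i) = ∏ i ∈ s, a ^ g i := by
  classical
  induction s using Finset.cons_induction with
  | empty => simp
  | cons i s his ih => rw [Finset.sum_cons, Finset.prod_cons, zpow_add₀ ha, ih]

lemma sum_range_sub_int (N : ℕ) :
    (∑ j ∈ range N, ((j : ℤ) - N)) = -(((N + 1).choose 2 : ℕ) : ℤ) := by
  induction N with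
  | zero => simp
  | succ n ih =>
    rw [Finset.sum_range_succ]
    have h1 : ∑ j ∈ range n, ((j:ℤ) - (n+1:ℕ)) = (∑ j ∈ range n, ((j:ℤ) - n)) - n := by
      have hc : ∀ j ∈ range n, ((j:ℤ) - (n+1:ℕ)) = ((j:ℤ) - n) + (-1) := by
        intro j _
        push_cast
        ring
      rw [Finset.sum_congr rfl hc, Finset.sum_add_distrib, Finset.sum_const,
        Finset.card_range]
      push_cast
      ring
    have h2 : ((n + 2).choose 2 : ℤ) = ((n+1).choose 2 : ℤ) + (n + 1) := by
      rw [show n + 2 = (n+1) + 1 from rfl, Nat.choose_succ_succ, Nat.choose_one_right]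
      push_cast
      ring
    push_cast at *
    rw [h1, ih]
    push_cast
    linarith

lemma E_shift (N k : ℕ) :
    E ((k:ℤ) - N) = (k.choose 2 : ℤ) + (((N+1).choose 2 : ℕ) : ℤ) - N * k := by
  have h1 := E_spec ((k:ℤ) - N)
  have h2 := choose_two_int k
  have h3 := choose_two_int (N+1)
  have h4 : 2 * E ((k:ℤ) - N) =
      2 * ((k.choose 2 : ℤ) + (((N+1).choose 2 : ℕ) : ℤ) - N * k) := by
    push_cast at h3 ⊢
    linear_combination h1 - h2 - h3
  linarith

/-- The finite Jacobi triple product identity. -/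
lemma finite_id (hq0 : q ≠ 0) (hζ : ζ ≠ 0) (N : ℕ) :
    (∏ i ∈ range N, (1 + q ^ (i+1) * ζ⁻¹)) * (∏ j ∈ range N, (1 + q ^ j * ζ)) =
      ∑ k ∈ range (2*N+1),
        q ^ (E ((k:ℤ) - N)) * gb q (2*N) k * ζ ^ ((k:ℤ) - N) := by
  have hg := gauss q (ζ * q ^ (-(N:ℤ))) (2*N)
  -- product side
  have hP : ∏ j ∈ range (2*N), (1 + ζ * q ^ (-(N:ℤ)) * q ^ j) =
      (q ^ (-((((N+1).choose 2 : ℕ)) : ℤ)) * ζ ^ (N:ℕ)) *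
        ((∏ i ∈ range N, (1 + q ^ (i+1) * ζ⁻¹)) * (∏ j ∈ range N, (1 + q ^ j * ζ))) := by
    rw [two_mul, Finset.prod_range_add]
    have hB : ∀ i ∈ range N, (1 + ζ * q ^ (-(N:ℤ)) * q ^ (N + i)) = 1 + q ^ i * ζ := by
      intro i _
      have h1 : (q : ℂ) ^ (-(N:ℤ)) * q ^ (N + i) = q ^ i := by
        rw [← zpow_natCast q (N + i), ← zpow_add₀ hq0, ← zpow_natCast q i]
        congr 1
        push_cast
        ring
      have h2 : ζ * q ^ (-(N:ℤ)) * q ^ (N + i)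
          = ζ * ((q : ℂ) ^ (-(N:ℤ)) * q ^ (N + i)) := by ring
      rw [h2, h1]
      ring
    have hA : ∀ j ∈ range N, (1 + ζ * q ^ (-(N:ℤ)) * q ^ j)
        = (q ^ ((j:ℤ) - N) * ζ) * (1 + q ^ (N - j) * ζ⁻¹) := by
      intro j hj
      have hjN : j < N := Finset.mem_range.mp hj
      have h1 : (q : ℂ) ^ ((j:ℤ) - N) * q ^ ((N - j : ℕ)) = 1 := by
        rw [← zpow_natCast q (N - j), ← zpow_add₀ hq0,
          show ((j:ℤ) - N + ((N - j : ℕ) : ℤ)) = 0 by omega]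
        exact zpow_zero q
      have h2 : (q ^ ((j:ℤ) - N) * ζ) * (1 + q ^ (N - j) * ζ⁻¹)
          = q ^ ((j:ℤ) - N) * ζ + (q ^ ((j:ℤ) - N) * q ^ ((N - j : ℕ))) * (ζ * ζ⁻¹) := by
        ring
      have h3 : (q : ℂ) ^ ((j:ℤ) - N) = q ^ (-(N:ℤ)) * q ^ j := by
        rw [← zpow_natCast q j, ← zpow_add₀ hq0]
        congr 1
        omega
      rw [h2, h1, mul_inv_cancel₀ hζ, mul_one, h3]
      ring
    rw [Finset.prod_congr rfl hB, Finset.prod_congr rfl hA, Finset.prod_mul_distrib,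
      Finset.prod_mul_distrib, Finset.prod_const, Finset.card_range,
      ← zpow_sum₀ hq0, sum_range_sub_int]
    have hrefl : ∏ j ∈ range N, (1 + q ^ (N - j) * ζ⁻¹) =
        ∏ i ∈ range N, (1 + q ^ (i + 1) * ζ⁻¹) := by
      conv_rhs => rw [← Finset.prod_range_reflect (fun i => 1 + q ^ (i+1) * ζ⁻¹) N]
      refine Finset.prod_congr rfl fun j hj => ?_
      have hjN : j < N := Finset.mem_range.mp hj
      have he : N - 1 - j + 1 = N - j := by omega
      rw [he]
    rw [hrefl]
    ring
  -- sum side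
  have hS : ∀ k ∈ range (2*N+1),
      (q ^ ((((N+1).choose 2 : ℕ)) : ℤ) * ζ ^ (-(N:ℤ))) *
        (q ^ (k.choose 2) * gb q (2*N) k * (ζ * q ^ (-(N:ℤ))) ^ k) =
      q ^ (E ((k:ℤ) - N)) * gb q (2*N) k * ζ ^ ((k:ℤ) - N) := by
    intro k _
    have hx : (ζ * q ^ (-(N:ℤ))) ^ k = ζ ^ (k:ℤ) * q ^ (-(N:ℤ) * k) := by
      rw [mul_pow, ← zpow_natCast ζ k, ← zpow_natCast (q ^ (-(N:ℤ))) k, ← zpow_mul]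
    rw [hx, E_shift N k]
    rw [show (k.choose 2 : ℤ) + (((N+1).choose 2 : ℕ) : ℤ) - N * k
        = (((N+1).choose 2 : ℕ) : ℤ) + ((k.choose 2 : ℤ) + (-(N:ℤ) * k)) by ring]
    rw [zpow_add₀ hq0, zpow_add₀ hq0,
      show ((k:ℤ) - N) = -(N:ℤ) + k by ring, zpow_add₀ hζ,
      ← zpow_natCast q (k.choose 2)]
    ring
  -- combine
  have key : (q ^ ((((N+1).choose 2 : ℕ)) : ℤ) * ζ ^ (-(N:ℤ))) *
      ∏ j ∈ range (2*N), (1 + ζ * q ^ (-(N:ℤ)) * q ^ j) =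
      (∏ i ∈ range N, (1 + q ^ (i+1) * ζ⁻¹)) * (∏ j ∈ range N, (1 + q ^ j * ζ)) := by
    rw [hP]
    have e1 : (q : ℂ) ^ ((((N+1).choose 2 : ℕ)) : ℤ) * q ^ (-((((N+1).choose 2 : ℕ)) : ℤ))
        = 1 := by
      rw [← zpow_add₀ hq0]
      simp
    have e2 : ζ ^ (-(N:ℤ)) * ζ ^ (N:ℕ) = 1 := by
      rw [← zpow_natCast ζ N, ← zpow_add₀ hζ]
      simp
    calc (q ^ ((((N+1).choose 2 : ℕ)) : ℤ) * ζ ^ (-(N:ℤ))) *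
          ((q ^ (-((((N+1).choose 2 : ℕ)) : ℤ)) * ζ ^ (N:ℕ)) *
            ((∏ i ∈ range N, (1 + q ^ (i+1) * ζ⁻¹)) * (∏ j ∈ range N, (1 + q ^ j * ζ))))
        = (q ^ ((((N+1).choose 2 : ℕ)) : ℤ) * q ^ (-((((N+1).choose 2 : ℕ)) : ℤ))) *
          (ζ ^ (-(N:ℤ)) * ζ ^ (N:ℕ)) *
            ((∏ i ∈ range N, (1 + q ^ (i+1) * ζ⁻¹)) * (∏ j ∈ range N, (1 + q ^ j * ζ))) := by
          ring
      _ = _ := by rw [e1, e2]; ring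
  rw [← key, hg, Finset.mul_sum]
  exact Finset.sum_congr rfl hS

end JTPaux
namespace JTPaux

open Complex Finset Filter Topology

variable {q ζ : ℂ}

lemma E_add_one (m : ℤ) : E (m + 1) = E m + m := by
  have h1 := E_spec (m + 1)
  have h2 := E_spec m
  have h3 : 2 * E (m + 1) = 2 * (E m + m) := by linear_combination h1 - h2
  linarith

lemma E_two_mul (j : ℤ) : E (2 * j) = 2 * j^2 - j := by
  have h := E_spec (2 * j)
  have h2 : 2 * E (2 * j) = 2 * (2 * j^2 - j) := by linear_combination h
  linarith

lemma E_two_mul_add_one (j : ℤ) : E (2 * j + 1) = 2 * j^2 + j := by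
  have h := E_spec (2 * j + 1)
  have h2 : 2 * E (2 * j + 1) = 2 * (2 * j^2 + j) := by linear_combination h
  linarith

lemma summable_of_rec {g : ℕ → ℝ} (hg0 : ∀ n, 0 ≤ g n) {c : ℕ → ℝ}
    (hrec : ∀ n, g (n + 1) = c n * g n) (hc : Tendsto c atTop (𝓝 0)) :
    Summable g := by
  refine summable_of_ratio_norm_eventually_le (r := 1/2) (by norm_num) ?_
  filter_upwards [hc.eventually (eventually_le_nhds (by norm_num : (0:ℝ) < 1/2))] with n hn
  rw [Real.norm_of_nonneg (hg0 _), Real.norm_of_nonneg (hg0 _), hrec n]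
  exact mul_le_mul_of_nonneg_right hn (hg0 n)

lemma summable_EF (hq1 : ‖q‖ < 1) (hq0 : q ≠ 0) (hζ : ζ ≠ 0) :
    Summable (fun m : ℤ => ‖q‖ ^ E m * ‖ζ‖ ^ m) := by
  have hr0 : (0:ℝ) < ‖q‖ := norm_pos_iff.mpr hq0
  have hw0 : (0:ℝ) < ‖ζ‖ := norm_pos_iff.mpr hζ
  have hterm : ∀ m : ℤ, (0:ℝ) ≤ ‖q‖ ^ E m * ‖ζ‖ ^ m := fun m => by positivity
  apply Summable.of_nat_of_neg
  · refine summable_of_rec (fun n => hterm n) (c := fun n => ‖q‖ ^ n * ‖ζ‖)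
      (fun n => ?_) ?_
    · have hE : E ((n:ℤ) + 1) = E n + n := E_add_one n
      push_cast
      rw [hE, zpow_add₀ (ne_of_gt hr0), zpow_add₀ (ne_of_gt hw0)]
      rw [zpow_natCast, zpow_one]
      ring
    · have := (tendsto_pow_atTop_nhds_zero_of_lt_one hr0.le hq1).mul_const ‖ζ‖
      simpa using this
  · refine summable_of_rec (fun n => hterm (-n)) (c := fun n => ‖q‖ ^ (n+1) * ‖ζ‖⁻¹)
      (fun n => ?_) ?_
    · have hE : E (-((n:ℤ) + 1)) = E (-(n:ℤ)) + (n + 1) := by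
        have := E_add_one (-((n:ℤ) + 1))
        have h2 : -((n:ℤ)+1) + 1 = -(n:ℤ) := by ring
        rw [h2] at this
        linarith
      push_cast
      rw [hE, zpow_add₀ (ne_of_gt hr0), show (-((n:ℤ) + 1)) = -(n:ℤ) + (-1) by ring,
        zpow_add₀ (ne_of_gt hw0), zpow_neg_one]
      rw [show ((n:ℤ) + 1) = ((n + 1 : ℕ) : ℤ) by push_cast; ring, zpow_natCast]
      ring
    · have := (tendsto_pow_atTop_nhds_zero_of_lt_one hr0.le hq1).mul_const ‖ζ‖⁻¹
      have h2 : Tendsto (fun n : ℕ => n + 1) atTop atTop := tendsto_add_atTop_nat 1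
      simpa [Function.comp_def] using this.comp h2

lemma summable_c (hq1 : ‖q‖ < 1) (hq0 : q ≠ 0) (hζ : ζ ≠ 0) :
    Summable (fun m : ℤ => q ^ E m * ζ ^ m) := by
  refine Summable.of_norm_bounded (summable_EF hq1 hq0 hζ) (fun m => ?_)
  rw [norm_mul, norm_zpow, norm_zpow]

/-- The auxiliary truncated summand for Tannery's argument. -/
noncomputable def hN (q ζ : ℂ) (N : ℕ) (m : ℤ) : ℂ :=
  if -(N:ℤ) ≤ m ∧ m ≤ N then
    q ^ E m * ζ ^ m *
      (gb q (2*N) ((m + N).toNat) * ∏ i ∈ Finset.range (2*N), (1 - q ^ (i+1)))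
  else 0

/-- The core infinite Jacobi triple product identity (unsigned form). -/
theorem core (hq1 : ‖q‖ < 1) (hq0 : q ≠ 0) (hζ : ζ ≠ 0) :
    ∑' m : ℤ, q ^ E m * ζ ^ m =
      (∏' n : ℕ, (1 - q ^ (n+1))) *
        ((∏' n : ℕ, (1 + q ^ (n+1) * ζ⁻¹)) * (∏' n : ℕ, (1 + q ^ n * ζ))) := by
  have hr0 : (0:ℝ) < ‖q‖ := norm_pos_iff.mpr hq0
  set C : ℝ := Real.exp (‖q‖ * (1 - ‖q‖)⁻¹) with hCdef
  have hC0 : 0 < C := Real.exp_pos _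
  have hgeo : Summable (fun n : ℕ => q ^ n) := summable_geometric_of_norm_lt_one hq1
  have hgeo1 : Summable (fun n : ℕ => q ^ (n+1)) := by
    simpa [pow_succ] using hgeo.mul_right q
  have M1 : Multipliable (fun n : ℕ => 1 - q ^ (n+1)) := by
    simpa [sub_eq_add_neg] using multipliable_one_add (a := fun n => -(q ^ (n+1))) hgeo1.neg
  have M2 : Multipliable (fun n : ℕ => 1 + q ^ (n+1) * ζ⁻¹) :=
    multipliable_one_add (hgeo1.mul_right ζ⁻¹)
  have M3 : Multipliable (fun n : ℕ => 1 + q ^ n * ζ) :=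
    multipliable_one_add (hgeo.mul_right ζ)
  have h2N : Tendsto (fun N : ℕ => 2 * N) atTop atTop :=
    tendsto_atTop_mono (f := id) (fun n => by simp only [id]; omega) tendsto_id
  have hL : Tendsto (fun N : ℕ => (∏ i ∈ range (2*N), (1 - q ^ (i+1))) *
      ((∏ i ∈ range N, (1 + q ^ (i+1) * ζ⁻¹)) * (∏ j ∈ range N, (1 + q ^ j * ζ))))
      atTop (𝓝 ((∏' n : ℕ, (1 - q ^ (n+1))) *
        ((∏' n : ℕ, (1 + q ^ (n+1) * ζ⁻¹)) * (∏' n : ℕ, (1 + q ^ n * ζ))))) :=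
    ((M1.hasProd.tendsto_prod_nat).comp h2N).mul
      ((M2.hasProd.tendsto_prod_nat).mul (M3.hasProd.tendsto_prod_nat))
  -- factorization
  have hfact : ∀ (N : ℕ) (m : ℤ), -(N:ℤ) ≤ m → m ≤ N →
      gb q (2*N) ((m + N).toNat) * ∏ i ∈ range (2*N), (1 - q ^ (i+1)) =
      (∏ i ∈ range ((m+N).toNat), (1 - q ^ (2*N - i))) *
        ∏ i ∈ Ico ((m+N).toNat) (2*N), (1 - q ^ (i+1)) := by
    intro N m h1 h2
    have hK : (m+N).toNat ≤ 2*N := by omega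
    rw [← Finset.prod_range_mul_prod_Ico _ hK, ← mul_assoc, gbQ]
  have hAbound : ∀ N K : ℕ, K ≤ 2*N → ‖∏ i ∈ range K, (1 - q ^ (2*N - i))‖ ≤ C := by
    intro N K hK
    refine prod_norm_le hq1 _ _ ?_ ?_
    · intro x hx y hy hxy
      simp only [Finset.coe_range, Set.mem_Iio] at hx hy
      replace hxy : 2*N - x = 2*N - y := hxy
      omega
    · intro i hi
      simp only [Finset.mem_range] at hi
      omega
  have hBbound : ∀ a b : ℕ, ‖∏ i ∈ Ico a b, (1 - q ^ (i+1))‖ ≤ C := by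
    intro a b
    refine prod_norm_le hq1 _ _ ?_ ?_
    · intro x hx y hy hxy
      replace hxy : x + 1 = y + 1 := hxy
      omega
    · intro i _
      omega
  have hεlim : Tendsto (fun M : ℕ => Real.exp (‖q‖ ^ M * (1 - ‖q‖)⁻¹) - 1) atTop (𝓝 0) := by
    have h1 : Tendsto (fun M : ℕ => ‖q‖ ^ M * (1-‖q‖)⁻¹) atTop (𝓝 0) := by
      simpa using (tendsto_pow_atTop_nhds_zero_of_lt_one hr0.le hq1).mul_const (1-‖q‖)⁻¹
    have h2 := (Real.continuous_exp.tendsto 0).comp h1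
    have h3 := h2.sub_const 1
    simpa using h3
  -- pointwise convergence
  have hpt : ∀ m : ℤ, Tendsto (fun N => hN q ζ N m) atTop (𝓝 (q ^ E m * ζ ^ m)) := by
    intro m
    have key : Tendsto
        (fun N => gb q (2*N) ((m+N).toNat) * ∏ i ∈ range (2*N), (1 - q ^ (i+1)))
        atTop (𝓝 1) := by
      rw [tendsto_iff_dist_tendsto_zero]
      have hDlim : Tendsto (fun N : ℕ => (Real.exp (‖q‖ ^ (N - m.natAbs + 1) * (1 - ‖q‖)⁻¹) - 1))
          atTop (𝓝 0) := by
        have hD : Tendsto (fun N : ℕ => N - m.natAbs + 1) atTop atTop :=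
          (tendsto_add_atTop_nat 1).comp (tendsto_sub_atTop_nat m.natAbs)
        exact hεlim.comp hD
      refine squeeze_zero' (Eventually.of_forall fun N => dist_nonneg) ?_
        (by simpa using ((hDlim.mul_const C).add hDlim))
      filter_upwards [eventually_ge_atTop m.natAbs] with N hmN
      have h1 : -(N:ℤ) ≤ m := by omega
      have h2 : m ≤ N := by omega
      rw [dist_eq_norm, hfact N m h1 h2]
      set K := (m+N).toNat with hKdef
      have hK2N : K ≤ 2*N := by omega
      set A := ∏ i ∈ range K, (1 - q ^ (2*N - i)) with hAdef
      set B := ∏ i ∈ Ico K (2*N), (1 - q ^ (i+1)) with hBdef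
      set ε : ℝ := Real.exp (‖q‖ ^ (N - m.natAbs + 1) * (1 - ‖q‖)⁻¹) - 1 with hεdef
      have hε0 : 0 ≤ ε := by
        rw [hεdef]
        have : (1:ℝ) ≤ Real.exp (‖q‖ ^ (N - m.natAbs + 1) * (1 - ‖q‖)⁻¹) :=
          Real.one_le_exp (mul_nonneg (by positivity) (inv_nonneg.mpr (by linarith)))
        linarith
      have hA1 : ‖A - 1‖ ≤ ε := by
        rw [hAdef, hεdef]
        refine prod_est hq1 _ _ ?_ _ ?_
        · intro x hx y hy hxy
          simp only [Finset.coe_range, Set.mem_Iio] at hx hy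
          replace hxy : 2*N - x = 2*N - y := hxy
          omega
        · intro i hi
          simp only [Finset.mem_range] at hi
          omega
      have hB1 : ‖B - 1‖ ≤ ε := by
        rw [hBdef, hεdef]
        refine prod_est hq1 _ _ ?_ _ ?_
        · intro x hx y hy hxy
          replace hxy : x + 1 = y + 1 := hxy
          omega
        · intro i hi
          simp only [Finset.mem_Ico] at hi
          omega
      have hBC : ‖B‖ ≤ C := hBbound _ _
      calc ‖A * B - 1‖ = ‖(A - 1) * B + (B - 1)‖ := by ring_nf
        _ ≤ ‖(A - 1) * B‖ + ‖B - 1‖ := norm_add_le _ _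
        _ = ‖A - 1‖ * ‖B‖ + ‖B - 1‖ := by rw [norm_mul]
        _ ≤ ε * C + ε := by
            gcongr <;> first | assumption | positivity
    have heq : ∀ᶠ N in atTop,
        q ^ E m * ζ ^ m *
          (gb q (2*N) ((m+N).toNat) * ∏ i ∈ range (2*N), (1 - q ^ (i+1))) = hN q ζ N m := by
      filter_upwards [eventually_ge_atTop m.natAbs] with N hmN
      simp only [hN]
      rw [if_pos ⟨by omega, by omega⟩]
    have := (tendsto_const_nhds (x := q ^ E m * ζ ^ m) (f := atTop)).mul key
    rw [mul_one] at this
    exact this.congr' heq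
  -- domination
  have hbd : ∀ (N : ℕ) (m : ℤ), ‖hN q ζ N m‖ ≤ C^2 * (‖q‖ ^ E m * ‖ζ‖ ^ m) := by
    intro N m
    by_cases hc : -(N:ℤ) ≤ m ∧ m ≤ N
    · simp only [hN]
      rw [if_pos hc, norm_mul, norm_mul, norm_zpow, norm_zpow]
      rw [hfact N m hc.1 hc.2, norm_mul]
      have hK2N : (m+N).toNat ≤ 2*N := by omega
      have h1 := hAbound N _ hK2N
      have h2 := hBbound ((m+N).toNat) (2*N)
      calc ‖q‖ ^ E m * ‖ζ‖ ^ m * (‖∏ i ∈ range ((m+N).toNat), (1 - q ^ (2*N - i))‖ *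
            ‖∏ i ∈ Ico ((m+N).toNat) (2*N), (1 - q ^ (i+1))‖)
          ≤ ‖q‖ ^ E m * ‖ζ‖ ^ m * (C * C) := by
            have hpos : (0:ℝ) ≤ ‖q‖ ^ E m * ‖ζ‖ ^ m := by positivity
            refine mul_le_mul_of_nonneg_left ?_ hpos
            exact mul_le_mul h1 h2 (norm_nonneg _) hC0.le
        _ = C^2 * (‖q‖ ^ E m * ‖ζ‖ ^ m) := by ring
    · simp only [hN]
      rw [if_neg hc, norm_zero]
      positivity
  have hbound : Summable (fun m : ℤ => C^2 * (‖q‖ ^ E m * ‖ζ‖ ^ m)) :=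
    (summable_EF hq1 hq0 hζ).mul_left _
  have hTsum : Tendsto (fun N => ∑' m : ℤ, hN q ζ N m) atTop
      (𝓝 (∑' m : ℤ, q ^ E m * ζ ^ m)) :=
    tendsto_tsum_of_dominated_convergence hbound hpt (Eventually.of_forall hbd)
  -- identify the partial products with the truncated sums
  have hid : ∀ N : ℕ, (∏ i ∈ range (2*N), (1 - q ^ (i+1))) *
      ((∏ i ∈ range N, (1 + q ^ (i+1) * ζ⁻¹)) * (∏ j ∈ range N, (1 + q ^ j * ζ))) =
      ∑' m : ℤ, hN q ζ N m := by
    intro N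
    rw [finite_id hq0 hζ N, Finset.mul_sum]
    have hsupp : ∀ m ∉ Finset.Icc (-(N:ℤ)) N, hN q ζ N m = 0 := by
      intro m hm
      rw [Finset.mem_Icc] at hm
      simp only [hN]
      rw [if_neg (by omega)]
    rw [tsum_eq_sum hsupp]
    have hmap : Finset.Icc (-(N:ℤ)) N =
        (Finset.range (2*N+1)).map
          (⟨fun k : ℕ => (k:ℤ) - N, show Function.Injective (fun k : ℕ => (k:ℤ) - N) from fun a b hab => by
            replace hab : (a:ℤ) - N = (b:ℤ) - N := hab
            omega⟩ : ℕ ↪ ℤ) := by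
      ext m
      simp only [Finset.mem_Icc, Finset.mem_map, Finset.mem_range,
        Function.Embedding.coeFn_mk]
      constructor
      · intro hm
        exact ⟨(m + N).toNat, by omega, by omega⟩
      · rintro ⟨k, hk, rfl⟩
        omega
    rw [hmap, Finset.sum_map]
    refine Finset.sum_congr rfl fun k hk => ?_
    have hkr : k < 2*N+1 := Finset.mem_range.mp hk
    simp only [Function.Embedding.coeFn_mk]
    simp only [hN]
    rw [if_pos ⟨by omega, by omega⟩, show ((k:ℤ) - N + N).toNat = k by omega]
    ring
  have hL' : Tendsto (fun N => ∑' m : ℤ, hN q ζ N m) atTop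
      (𝓝 ((∏' n : ℕ, (1 - q ^ (n+1))) *
        ((∏' n : ℕ, (1 + q ^ (n+1) * ζ⁻¹)) * (∏' n : ℕ, (1 + q ^ n * ζ))))) :=
    hL.congr hid
  exact tendsto_nhds_unique hTsum hL'

end JTPaux


open Complex

/-- `ee w = exp(2πiw)`; thus `q^r = ee (r·τ)` and `ζ^r = ee (r·u)`. -/
noncomputable def ee (w : ℂ) : ℂ := Complex.exp (2 * Real.pi * Complex.I * w)

/-- `ϑ11(τ,u) = −q^{1/8} ζ^{−1/2} ∏_{n≥1} (1−q^{n−1}ζ)(1−qⁿζ^{−1})(1−qⁿ)`. -/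
noncomputable def th11 (τ : UpperHalfPlane) (u : ℂ) : ℂ :=
  -(ee ((τ : ℂ) / 8) * ee (-u / 2)) *
    ∏' n : ℕ, ((1 - ee ((n : ℂ) * (τ : ℂ)) * ee u) *
      (1 - ee (((n : ℂ) + 1) * (τ : ℂ)) * ee (-u)) * (1 - ee (((n : ℂ) + 1) * (τ : ℂ))))

/-- The rank-one theta function `Θ_{m,k}(τ,z) = ∑_{n ∈ ℤ + m/(2k)} exp(2πik(n²τ + nz))`,
parameterized as `n = j + m/(2k)` with `j ∈ ℤ`. -/
noncomputable def Th1 (m : ℤ) (k : ℕ) (τ : UpperHalfPlane) (z : ℂ) : ℂ :=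
  ∑' j : ℤ, Complex.exp (2 * Real.pi * Complex.I * (k : ℂ) *
    (((j : ℂ) + (m : ℂ) / (2 * (k : ℂ))) ^ 2 * (τ : ℂ) +
      ((j : ℂ) + (m : ℂ) / (2 * (k : ℂ))) * z))

/-- The normalized Weyl–Kac character `χ^{(k)}_λ` of the level-`k` integrable irreducible
highest-weight module of highest weight `λ` over the affine Kac–Moody algebra `ŝl₂`:
`χ^{(k)}_λ = (Θ_{λ+1,k+2} − Θ_{−λ−1,k+2}) / (Θ_{1,2} − Θ_{−1,2})`. -/
noncomputable def chiA1 (k lam : ℕ) (τ : UpperHalfPlane) (z : ℂ) : ℂ :=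
  (Th1 ((lam : ℤ) + 1) (k + 2) τ z - Th1 (-(lam : ℤ) - 1) (k + 2) τ z) /
    (Th1 1 2 τ z - Th1 (-1) 2 τ z)


open Complex Filter Topology JTPaux

lemma ee_add (a b : ℂ) : ee (a + b) = ee a * ee b := by
  rw [ee, ee, ee, ← Complex.exp_add]
  congr 1
  ring

lemma ee_ne (a : ℂ) : ee a ≠ 0 := Complex.exp_ne_zero _

lemma ee_int (n : ℤ) (x : ℂ) : ee ((n:ℂ) * x) = ee x ^ n := by
  rw [ee, ee, ← Complex.exp_int_mul]
  congr 1
  ring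

lemma ee_nat (n : ℕ) (x : ℂ) : ee ((n:ℂ) * x) = ee x ^ n := by
  rw [ee, ee, ← Complex.exp_nat_mul]
  congr 1
  ring

lemma ee_neg (x : ℂ) : ee (-x) = (ee x)⁻¹ := by
  rw [ee, ee, ← Complex.exp_neg]
  congr 1
  ring

lemma norm_ee_lt_one (τ : UpperHalfPlane) : ‖ee (τ:ℂ)‖ < 1 := by
  rw [ee, Complex.norm_exp, Real.exp_lt_one_iff]
  have h1 : (2 * (Real.pi:ℂ) * Complex.I * (τ:ℂ))
      = ((2*Real.pi : ℝ) : ℂ) * (Complex.I * (τ:ℂ)) := by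
    push_cast
    ring
  rw [h1, Complex.re_ofReal_mul]
  have h2 : (Complex.I * (τ:ℂ)).re = -(τ:ℂ).im := by simp [Complex.mul_re]
  rw [h2, UpperHalfPlane.coe_im]
  nlinarith [τ.im_pos, Real.pi_pos]

lemma tsum_int_even_odd {f : ℤ → ℂ} (hf : Summable f) :
    ∑' m : ℤ, f m = (∑' j : ℤ, f (2*j)) + ∑' j : ℤ, f (2*j+1) := by
  have hsum : Summable (f ∘ (Int.divModEquiv 2).symm) :=
    (Int.divModEquiv 2).symm.summable_iff.mpr hf
  have h1 : ∀ j : ℤ, (∑' r : Fin 2, (f ∘ (Int.divModEquiv 2).symm) (j, r))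
      = f (2*j) + f (2*j+1) := by
    intro j
    rw [tsum_fintype, Fin.sum_univ_two]
    have e0 : ((Int.divModEquiv 2).symm (j, 0) : ℤ) = 2*j := by
      simp [Int.divModEquiv]; omega
    have e1 : ((Int.divModEquiv 2).symm (j, 1) : ℤ) = 2*j+1 := by
      simp [Int.divModEquiv]; omega
    simp only [Function.comp_apply, e0, e1]
  calc ∑' m : ℤ, f m = ∑' p : ℤ × Fin 2, (f ∘ (Int.divModEquiv 2).symm) p :=
        ((Int.divModEquiv 2).symm.tsum_eq f).symm
    _ = ∑' j : ℤ, ∑' r : Fin 2, (f ∘ (Int.divModEquiv 2).symm) (j, r) := Summable.tsum_prod hsum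
    _ = ∑' j : ℤ, (f (2*j) + f (2*j+1)) := tsum_congr h1
    _ = (∑' j : ℤ, f (2*j)) + ∑' j : ℤ, f (2*j+1) :=
        Summable.tsum_add (hf.comp_injective (fun a b h => by omega))
          (hf.comp_injective (fun a b h => by omega))

lemma tsum_int_mod3 {f : ℤ → ℂ} (hf : Summable f) :
    ∑' m : ℤ, f m = (∑' j : ℤ, f (3*j)) + (∑' j : ℤ, f (3*j+1)) + ∑' j : ℤ, f (3*j-1) := by
  have hsum : Summable (f ∘ (Int.divModEquiv 3).symm) :=
    (Int.divModEquiv 3).symm.summable_iff.mpr hf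
  have h1 : ∀ j : ℤ, (∑' r : Fin 3, (f ∘ (Int.divModEquiv 3).symm) (j, r))
      = f (3*j) + f (3*j+1) + f (3*j+2) := by
    intro j
    rw [tsum_fintype, Fin.sum_univ_three]
    have e0 : ((Int.divModEquiv 3).symm (j, 0) : ℤ) = 3*j := by
      simp [Int.divModEquiv]; omega
    have e1 : ((Int.divModEquiv 3).symm (j, 1) : ℤ) = 3*j+1 := by
      simp [Int.divModEquiv]; omega
    have e2 : ((Int.divModEquiv 3).symm (j, 2) : ℤ) = 3*j+2 := by
      simp [Int.divModEquiv]; omega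
    simp only [Function.comp_apply, e0, e1, e2]
  have hshift : ∑' j : ℤ, f (3*j+2) = ∑' j : ℤ, f (3*j-1) := by
    have h := (Equiv.addRight (1:ℤ)).tsum_eq (fun j => f (3*j-1))
    rw [← h]
    refine tsum_congr fun j => ?_
    congr 1
    simp only [Equiv.coe_addRight]
    ring
  calc ∑' m : ℤ, f m = ∑' p : ℤ × Fin 3, (f ∘ (Int.divModEquiv 3).symm) p :=
        ((Int.divModEquiv 3).symm.tsum_eq f).symm
    _ = ∑' j : ℤ, ∑' r : Fin 3, (f ∘ (Int.divModEquiv 3).symm) (j, r) := Summable.tsum_prod hsum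
    _ = ∑' j : ℤ, (f (3*j) + f (3*j+1) + f (3*j+2)) := tsum_congr h1
    _ = (∑' j : ℤ, (f (3*j) + f (3*j+1))) + ∑' j : ℤ, f (3*j+2) :=
        Summable.tsum_add ((hf.comp_injective (fun a b h => by omega)).add
          (hf.comp_injective (fun a b h => by omega)))
          (hf.comp_injective (fun a b h => by omega))
    _ = (∑' j : ℤ, f (3*j)) + (∑' j : ℤ, f (3*j+1)) + ∑' j : ℤ, f (3*j+2) := by
        rw [Summable.tsum_add (f := fun j : ℤ => f (3*j)) (g := fun j : ℤ => f (3*j+1))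
          (hf.comp_injective (fun a b h => by omega))
          (hf.comp_injective (fun a b h => by omega))]
    _ = _ := by rw [hshift]

/-- The master summand: `Gfun τ w m = -q^{1/8}ζ^{-1/2} · q^{E m} (-ζ)^m`. -/
noncomputable def Gfun (τ : UpperHalfPlane) (w : ℂ) (m : ℤ) : ℂ :=
  -(ee ((τ:ℂ)/8) * ee (-w/2)) * (ee (τ:ℂ) ^ (JTPaux.E m) * (-(ee w)) ^ m)

lemma Gfun_summable (τ : UpperHalfPlane) (w : ℂ) : Summable (Gfun τ w) :=
  Summable.mul_left _
    (JTPaux.summable_c (norm_ee_lt_one τ) (ee_ne _) (neg_ne_zero.mpr (ee_ne w)))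

lemma neg_one_zpow_two_mul (j : ℤ) : ((-1 : ℂ)) ^ (2*j) = 1 := by
  rw [zpow_mul]
  norm_num

lemma Gfun_even (τ : UpperHalfPlane) (w : ℂ) (j : ℤ) :
    Gfun τ w (2*j) =
      -ee ((τ:ℂ)/8 + -w/2 + ((2*j^2 - j : ℤ):ℂ) * (τ:ℂ) + ((2*j:ℤ):ℂ) * w) := by
  simp only [Gfun]
  rw [E_two_mul]
  have h1 : (-(ee w)) ^ (2*j) = ee w ^ (2*j) := by
    rw [show -(ee w) = (-1:ℂ) * ee w by ring, mul_zpow, neg_one_zpow_two_mul, one_mul]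
  rw [h1, ← ee_int (2*j^2 - j) (τ:ℂ), ← ee_int (2*j) w, ee_add, ee_add, ee_add]
  ring

lemma Gfun_odd (τ : UpperHalfPlane) (w : ℂ) (j : ℤ) :
    Gfun τ w (2*j+1) =
      ee ((τ:ℂ)/8 + -w/2 + ((2*j^2 + j : ℤ):ℂ) * (τ:ℂ) + ((2*j+1:ℤ):ℂ) * w) := by
  simp only [Gfun]
  rw [E_two_mul_add_one]
  have h1 : (-(ee w)) ^ (2*j+1) = -(ee w ^ (2*j+1)) := by
    rw [show -(ee w) = (-1:ℂ) * ee w by ring, mul_zpow,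
      zpow_add₀ (by norm_num : (-1:ℂ) ≠ 0), neg_one_zpow_two_mul, zpow_one]
    ring
  rw [h1, ← ee_int (2*j^2 + j) (τ:ℂ), ← ee_int (2*j+1) w, ee_add, ee_add, ee_add]
  ring

lemma th1_repr_pos (τ : UpperHalfPlane) (w : ℂ) :
    Th1 1 2 τ w = ∑' j : ℤ, Gfun τ w (2*j+1) := by
  simp only [Th1]
  refine tsum_congr fun j => ?_
  rw [Gfun_odd]
  simp only [ee]
  congr 1
  push_cast
  ring

lemma th1_repr_neg (τ : UpperHalfPlane) (w : ℂ) :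
    Th1 (-1) 2 τ w = ∑' j : ℤ, -Gfun τ w (2*j) := by
  simp only [Th1]
  refine tsum_congr fun j => ?_
  rw [Gfun_even, neg_neg]
  simp only [ee]
  congr 1
  push_cast
  ring

lemma Gfun_tsum (τ : UpperHalfPlane) (w : ℂ) : ∑' m : ℤ, Gfun τ w m = th11 τ w := by
  have hq1 := norm_ee_lt_one τ
  have hq0 : ee (τ:ℂ) ≠ 0 := ee_ne _
  have hz0 : ee w ≠ 0 := ee_ne _
  have hnz0 : -(ee w) ≠ 0 := neg_ne_zero.mpr hz0
  have hgeo : Summable (fun n : ℕ => ee (τ:ℂ) ^ n) := summable_geometric_of_norm_lt_one hq1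
  have hgeo1 : Summable (fun n : ℕ => ee (τ:ℂ) ^ (n+1)) := by
    simpa [pow_succ] using hgeo.mul_right (ee (τ:ℂ))
  have MA : Multipliable (fun n : ℕ => 1 - ee (τ:ℂ)^n * ee w) := by
    simpa [sub_eq_add_neg] using
      multipliable_one_add (a := fun n : ℕ => -(ee (τ:ℂ)^n * ee w))
        (hgeo.mul_right (ee w)).neg
  have MB : Multipliable (fun n : ℕ => 1 - ee (τ:ℂ)^(n+1) * (ee w)⁻¹) := by
    simpa [sub_eq_add_neg] using
      multipliable_one_add (a := fun n : ℕ => -(ee (τ:ℂ)^(n+1) * (ee w)⁻¹))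
        (hgeo1.mul_right _).neg
  have MC : Multipliable (fun n : ℕ => 1 - ee (τ:ℂ)^(n+1)) := by
    simpa [sub_eq_add_neg] using
      multipliable_one_add (a := fun n : ℕ => -(ee (τ:ℂ)^(n+1))) hgeo1.neg
  have h1 : ∑' m : ℤ, Gfun τ w m
      = -(ee ((τ:ℂ)/8) * ee (-w/2)) *
          ∑' m : ℤ, ee (τ:ℂ) ^ (JTPaux.E m) * (-(ee w)) ^ m := by
    simp only [Gfun]
    exact tsum_mul_left
  rw [h1, JTPaux.core hq1 hq0 hnz0]
  simp only [th11]
  have hfac : ∀ n : ℕ,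
      ((1 - ee ((n:ℂ) * (τ:ℂ)) * ee w) * (1 - ee (((n:ℂ)+1) * (τ:ℂ)) * ee (-w)) *
          (1 - ee (((n:ℂ)+1) * (τ:ℂ))))
      = (1 - ee (τ:ℂ)^n * ee w) *
          ((1 - ee (τ:ℂ)^(n+1) * (ee w)⁻¹) * (1 - ee (τ:ℂ)^(n+1))) := by
    intro n
    rw [ee_nat n (τ:ℂ), show ((n:ℂ)+1) = ((n+1:ℕ):ℂ) by push_cast; ring,
      ee_nat (n+1) (τ:ℂ), ee_neg w]
    ring
  rw [tprod_congr hfac, Multipliable.tprod_mul MA (MB.mul MC), Multipliable.tprod_mul MB MC]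
  have hB' : ∏' n : ℕ, (1 + ee (τ:ℂ)^(n+1) * (-(ee w))⁻¹)
      = ∏' n : ℕ, (1 - ee (τ:ℂ)^(n+1) * (ee w)⁻¹) :=
    tprod_congr fun n => by rw [inv_neg]; ring
  have hA' : ∏' n : ℕ, (1 + ee (τ:ℂ)^n * (-(ee w)))
      = ∏' n : ℕ, (1 - ee (τ:ℂ)^n * ee w) :=
    tprod_congr fun n => by ring
  rw [hB', hA']
  ring

theorem Th1_diff (τ : UpperHalfPlane) (w : ℂ) :
    Th1 1 2 τ w - Th1 (-1) 2 τ w = th11 τ w := by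
  rw [th1_repr_pos, th1_repr_neg, tsum_neg, ← Gfun_tsum τ w,
    tsum_int_even_odd (Gfun_summable τ w)]
  ring


section Main

open Complex JTPaux

variable (τ : UpperHalfPlane) (z : ℂ)

lemma repr3 : Th1 3 18 τ z = ∑' u : ℤ, Gfun τ (3*z) (2*(3*u)+1) := by
  simp only [Th1]
  refine tsum_congr fun u => ?_
  rw [Gfun_odd]
  simp only [ee]
  congr 1
  push_cast
  ring

lemma repr15 : Th1 15 18 τ z = ∑' u : ℤ, Gfun τ (3*z) (2*(3*u+1)+1) := by
  simp only [Th1]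
  refine tsum_congr fun u => ?_
  rw [Gfun_odd]
  simp only [ee]
  congr 1
  push_cast
  ring

lemma reprm9 : Th1 (-9) 18 τ z = ∑' u : ℤ, Gfun τ (3*z) (2*(3*u-1)+1) := by
  simp only [Th1]
  refine tsum_congr fun u => ?_
  rw [Gfun_odd]
  simp only [ee]
  congr 1
  push_cast
  ring

lemma reprm3 : Th1 (-3) 18 τ z = ∑' u : ℤ, -Gfun τ (3*z) (2*(3*u)) := by
  simp only [Th1]
  refine tsum_congr fun u => ?_
  rw [Gfun_even, neg_neg]
  simp only [ee]
  congr 1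
  push_cast
  ring

lemma repr9 : Th1 9 18 τ z = ∑' u : ℤ, -Gfun τ (3*z) (2*(3*u+1)) := by
  simp only [Th1]
  refine tsum_congr fun u => ?_
  rw [Gfun_even, neg_neg]
  simp only [ee]
  congr 1
  push_cast
  ring

lemma reprm15 : Th1 (-15) 18 τ z = ∑' u : ℤ, -Gfun τ (3*z) (2*(3*u-1)) := by
  simp only [Th1]
  refine tsum_congr fun u => ?_
  rw [Gfun_even, neg_neg]
  simp only [ee]
  congr 1
  push_cast
  ring

lemma split_pos :
    Th1 1 2 τ (3*z) = Th1 3 18 τ z + Th1 15 18 τ z + Th1 (-9) 18 τ z := by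
  have hf : Summable (fun j : ℤ => Gfun τ (3*z) (2*j+1)) :=
    (Gfun_summable τ (3*z)).comp_injective (fun a b h => by omega)
  rw [th1_repr_pos τ (3*z), tsum_int_mod3 hf, repr3, repr15, reprm9]

lemma split_neg :
    Th1 (-1) 2 τ (3*z) = Th1 (-3) 18 τ z + Th1 9 18 τ z + Th1 (-15) 18 τ z := by
  have hf : Summable (fun j : ℤ => -Gfun τ (3*z) (2*j)) :=
    ((Gfun_summable τ (3*z)).comp_injective (fun a b h => by omega)).neg
  rw [th1_repr_neg τ (3*z), tsum_int_mod3 hf, reprm3, repr9, reprm15]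

end Main

/-- `Θ_{3,18} − Θ_{−3,18} + Θ_{15,18} − Θ_{−15,18} − Θ_{9,18} + Θ_{−9,18} = ϑ11(τ,3z)`;
equivalently, wherever the denominator `Θ_{1,2} − Θ_{−1,2} ( = ϑ11(τ,z))` is nonzero,
the Jacobi form input attached to `A_{1,16}` satisfies
`χ^{(16)}₂ + χ^{(16)}₁₄ − χ^{(16)}₈ = ϑ11(τ,3z)/ϑ11(τ,z)`, i.e.
`φ_{A_{1,16}} = −(ϑ|_{1/2}T⁽⁸⁾₋(9))/ϑ` with `(ϑ|_{1/2}T⁽⁸⁾₋(9))(τ,z) = −ϑ(τ,3z)`. -/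
theorem A1_level16_input_theta_quotient (τ : UpperHalfPlane) (z : ℂ) :
    (Th1 3 18 τ z - Th1 (-3) 18 τ z + Th1 15 18 τ z - Th1 (-15) 18 τ z
        - Th1 9 18 τ z + Th1 (-9) 18 τ z = th11 τ (3 * z)) ∧
    (Th1 1 2 τ z - Th1 (-1) 2 τ z ≠ 0 →
      chiA1 16 2 τ z + chiA1 16 14 τ z - chiA1 16 8 τ z = th11 τ (3 * z) / th11 τ z) := by
  have hP := split_pos τ z
  have hM := split_neg τ z
  have hD3 := Th1_diff τ (3*z)
  have hpart1 : Th1 3 18 τ z - Th1 (-3) 18 τ z + Th1 15 18 τ z - Th1 (-15) 18 τ z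
      - Th1 9 18 τ z + Th1 (-9) 18 τ z = th11 τ (3 * z) := by
    linear_combination -hP + hM + hD3
  refine ⟨hpart1, fun _ => ?_⟩
  have hc2 : chiA1 16 2 τ z =
      (Th1 3 18 τ z - Th1 (-3) 18 τ z) / (Th1 1 2 τ z - Th1 (-1) 2 τ z) := by
    simp only [chiA1]
    norm_num
  have hc14 : chiA1 16 14 τ z =
      (Th1 15 18 τ z - Th1 (-15) 18 τ z) / (Th1 1 2 τ z - Th1 (-1) 2 τ z) := by
    simp only [chiA1]
    norm_num
  have hc8 : chiA1 16 8 τ z =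
      (Th1 9 18 τ z - Th1 (-9) 18 τ z) / (Th1 1 2 τ z - Th1 (-1) 2 τ z) := by
    simp only [chiA1]
    norm_num
  rw [hc2, hc14, hc8, ← add_div, div_sub_div_same]
  rw [show Th1 3 18 τ z - Th1 (-3) 18 τ z + (Th1 15 18 τ z - Th1 (-15) 18 τ z)
      - (Th1 9 18 τ z - Th1 (-9) 18 τ z) = th11 τ (3 * z) from by linear_combination hpart1]
  rw [← Th1_diff τ z]
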